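/- Let g, p be finite-dimensional Lie algebras over R with an injective linear map ι: p → g*. Suppose there exists a quadratic Lie algebra m and a Lie algebra morphism Φ: g → m such that Φ has isotropic image, p embeds as a Lagrangian subalgebra of m, ⟨Φ(x), ξ⟩ = ⟨ι(ξ), x⟩ for all x ∈ g and ξ ∈ p, and Φ(g) + p = m. Then p° := {x ∈ g : ⟨ι(ξ), x⟩ = 0 for all ξ ∈ p} is an ideal of g. -/
import Mathlib


/-- Let `g, p` be finite-dimensional real Lie algebras with an injective
linear map `ι : p → g*`.  Suppose there exist a quadratic Lie algebra `(m, B)` and a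
Lie algebra morphism `Φ : g → m` such that `Φ` has isotropic image, `p` embeds (via a
Lie algebra morphism `ψ`) as a Lagrangian subalgebra of `m`, the pairings are
compatible (`B(Φx, ψξ) = (ι ξ)(x)`), and `Φ(g) + p = m`.  Then
`p° = {x ∈ g | (ι ξ)(x) = 0 ∀ ξ ∈ p}` is an ideal of `g`. -/
theorem annihilator_is_ideal
    (g p m : Type*) [LieRing g] [LieAlgebra ℝ g] [LieRing p] [LieAlgebra ℝ p]
    [LieRing m] [LieAlgebra ℝ m]
    [FiniteDimensional ℝ g] [FiniteDimensional ℝ p]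
    (ι : p →ₗ[ℝ] Module.Dual ℝ g) (hι : Function.Injective ι)
    -- `(m, B)` is a quadratic Lie algebra:
    (B : m →ₗ[ℝ] m →ₗ[ℝ] ℝ)
    (hsymm : ∀ x y : m, B x y = B y x)
    (hinvariant : ∀ x y z : m, B ⁅x, y⁆ z + B y ⁅x, z⁆ = 0)
    (hnondeg : ∀ x : m, (∀ y : m, B x y = 0) → x = 0)
    -- `Φ : g → m` is a Lie algebra morphism with isotropic image:
    (Φ : g →ₗ⁅ℝ⁆ m)
    (hΦiso : ∀ x y : g, B (Φ x) (Φ y) = 0)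
    -- `p` embeds as a Lagrangian subalgebra of `m`:
    (ψ : p →ₗ⁅ℝ⁆ m) (hψ : Function.Injective ψ)
    (hψiso : ∀ ξ η : p, B (ψ ξ) (ψ η) = 0)
    (hLagrangian : ∀ z : m, (∀ ξ : p, B z (ψ ξ) = 0) → ∃ ξ, z = ψ ξ)
    -- pairing compatibility:
    (hcompat : ∀ (x : g) (ξ : p), B (Φ x) (ψ ξ) = ι ξ x)
    -- `Φ(g) + p = m`:
    (hsurj : ∀ z : m, ∃ (x : g) (ξ : p), z = Φ x + ψ ξ) :
    ∀ (y x : g), (∀ ξ : p, ι ξ x = 0) → ∀ ξ : p, ι ξ ⁅y, x⁆ = 0 := by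
  intro y x hx ξ
  have hΦx : Φ x = 0 := by
    apply hnondeg
    intro z
    obtain ⟨a, η, rfl⟩ := hsurj z
    rw [map_add, hΦiso, hcompat, hx, add_zero]
  rw [← hcompat, LieHom.map_lie, hΦx, lie_zero]
  simp
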